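/- Let G be a connected threshold graph with c ≥ 3 type-1 vertices, z ≥ 1 type-0 vertices, and BZP sequence b₁, …, b_z; set F₁ = ∑ b_i². Then the spectral radius ρ of G satisfies ρ ≥ (c − 2 + √(c² + 4F₁/(c−1)))/2; equivalently ρ² − (c−2)ρ − (F₁/(c−1) + c − 1) ≥ 0. -/

import Mathlib

/-!
Test the Rayleigh quotient of the adjacency matrix on the vector that is `r` on the first
`c - 1` clique vertices, `c - 1` on the last one and `bᵢ` on the `i`-th type-0 vertex.
Since `bᵢ ≤ c - 1`, every type-0 vertex sees only clique vertices carrying `r`, and the quotient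
equals `r` exactly when `(c - 1) r² = (c - 2)(c - 1) r + (c - 1)² + F₁`, whose larger root is the
claimed bound. A number dominating the spectrum of a real symmetric matrix dominates its
Rayleigh quotients.
-/

open Finset Matrix
open scoped MatrixOrder

theorem Matrix.IsHermitian.dotProduct_mulVec_le_mul_dotProduct {n : Type*} [Fintype n]
    [DecidableEq n] {A : Matrix n n ℝ} (hA : A.IsHermitian) {ρ : ℝ}
    (h : ∀ μ ∈ spectrum ℝ A, μ ≤ ρ) (x : n → ℝ) : x ⬝ᵥ (A *ᵥ x) ≤ ρ * (x ⬝ᵥ x) := by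
  have hle : A ≤ algebraMap ℝ _ ρ := le_algebraMap_of_spectrum_le h hA.isSelfAdjoint
  simpa [sub_mulVec, Algebra.algebraMap_eq_smul_one, smul_mulVec, dotProduct_sub] using
    (Matrix.le_iff.mp hle).dotProduct_mulVec_nonneg x

theorem Fin.sum_ite_val_lt {M : Type*} [AddCommMonoid M] {n m : ℕ} (hm : m ≤ n) (a e : M) :
    ∑ j : Fin n, (if (j : ℕ) < m then a else e) = m • a + (n - m) • e := by
  rw [sum_ite, Finset.sum_const, Finset.sum_const, filter_not,
    card_sdiff_of_subset (filter_subset _ _), Fin.card_filter_val_lt, card_univ,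
    Fintype.card_fin, min_eq_right hm]

theorem Fin.append_dotProduct_append {R : Type*} [AddCommMonoid R] [Mul R] {m n : ℕ}
    (p p' : Fin m → R) (q q' : Fin n → R) :
    Fin.append p q ⬝ᵥ Fin.append p' q' = p ⬝ᵥ p' + q ⬝ᵥ q' := by
  simp [dotProduct, Fin.sum_univ_add]

namespace SimpleGraph

structure IsThresholdWith {c z : ℕ} (b : Fin z → ℕ) (G : SimpleGraph (Fin (c + z))) :
    Prop where
  adj_castAdd_castAdd (j k : Fin c) : G.Adj (Fin.castAdd z j) (Fin.castAdd z k) ↔ j ≠ k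
  adj_castAdd_natAdd (j : Fin c) (i : Fin z) :
    G.Adj (Fin.castAdd z j) (Fin.natAdd c i) ↔ (j : ℕ) < b i
  not_adj_natAdd_natAdd (i i' : Fin z) : ¬ G.Adj (Fin.natAdd c i) (Fin.natAdd c i')

variable {c z : ℕ} {b : Fin z → ℕ} {G : SimpleGraph (Fin (c + z))}

theorem isThresholdWith_of_adj_iff (hz : 1 ≤ z)
    (hG : ∀ u v : Fin (c + z), G.Adj u v ↔ u ≠ v ∧
      ((u.1 < c ∧ v.1 < c) ∨
       (u.1 < c ∧ c ≤ v.1 ∧ u.1 < b ⟨v.1 - c, by omega⟩) ∨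
       (v.1 < c ∧ c ≤ u.1 ∧ v.1 < b ⟨u.1 - c, by omega⟩))) :
    G.IsThresholdWith b where
  adj_castAdd_castAdd j k := by simp [hG, Fin.ext_iff]
  adj_castAdd_natAdd j i := by
    have hne : (j : ℕ) ≠ c + i := by omega
    simp [hG, Fin.ext_iff, hne]
  not_adj_natAdd_natAdd i i' := by simp [hG]

namespace IsThresholdWith

theorem adj_natAdd_castAdd (hG : G.IsThresholdWith b) (i : Fin z) (j : Fin c) :
    G.Adj (Fin.natAdd c i) (Fin.castAdd z j) ↔ (j : ℕ) < b i :=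
  G.adj_comm _ _ |>.trans (hG.adj_castAdd_natAdd j i)

theorem append_dotProduct_adjMatrix_mulVec_append [DecidableRel G.Adj]
    (hG : G.IsThresholdWith b) (p : Fin c → ℝ) (q : Fin z → ℝ) :
    Fin.append p q ⬝ᵥ (G.adjMatrix ℝ *ᵥ Fin.append p q) =
      (∑ j, p j) ^ 2 - ∑ j, p j ^ 2 + 2 * ∑ i, q i * ∑ j : Fin c with j.val < b i, p j := by
  simp only [dotProduct_mulVec_adjMatrix, Fin.sum_univ_add, Fin.append_left, Fin.append_right,
    hG.adj_castAdd_castAdd, hG.adj_castAdd_natAdd, hG.adj_natAdd_castAdd,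
    hG.not_adj_natAdd_natAdd, if_false, sum_const_zero, add_zero, sum_add_distrib]
  have hclique :
      ∑ j, ∑ k, (if j ≠ k then p j * p k else 0) = (∑ j, p j) ^ 2 - ∑ j, p j ^ 2 := by
    have hoff (j k : Fin c) : (if j ≠ k then p j * p k else 0) =
        p j * p k - if j = k then p j * p k else 0 := by
      split_ifs <;> simp_all
    simp [hoff, sum_sub_distrib, sq, sum_mul_sum]
  have hcross : ∑ i, ∑ j : Fin c, (if j.val < b i then q i * p j else 0) =
      ∑ i, q i * ∑ j : Fin c with j.val < b i, p j := by
    simp [mul_sum, sum_filter]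
  rw [hclique, sum_comm (f := fun j i => if j.val < b i then p j * q i else 0)]
  simp only [mul_comm (p _), hcross]
  ring

end IsThresholdWith

end SimpleGraph

def thresholdTestVector {z : ℕ} (c : ℕ) (b : Fin z → ℕ) (r : ℝ) : Fin (c + z) → ℝ :=
  Fin.append (fun j => if j.val < c - 1 then r else (c : ℝ) - 1) (fun i => b i)

section thresholdTestVector

variable {c z : ℕ} {b : Fin z → ℕ}

theorem thresholdTestVector_dotProduct_self (hc : 1 ≤ c) (r : ℝ) :
    thresholdTestVector c b r ⬝ᵥ thresholdTestVector c b r =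
      ((c : ℝ) - 1) * r ^ 2 + ((c : ℝ) - 1) ^ 2 + ∑ i, (b i : ℝ) ^ 2 := by
  rw [thresholdTestVector, Fin.append_dotProduct_append]
  simp [dotProduct, ← sq, apply_ite (· ^ 2), Fin.sum_ite_val_lt (Nat.sub_le c 1),
    Nat.cast_sub hc]

theorem SimpleGraph.IsThresholdWith.dotProduct_adjMatrix_mulVec_thresholdTestVector
    {G : SimpleGraph (Fin (c + z))} [DecidableRel G.Adj] (hG : G.IsThresholdWith b)
    (hc : 1 ≤ c) (hb : ∀ i, b i ≤ c - 1) (r : ℝ) :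
    thresholdTestVector c b r ⬝ᵥ (G.adjMatrix ℝ *ᵥ thresholdTestVector c b r) =
      (((c : ℝ) - 1) * (r + 1)) ^ 2 - (((c : ℝ) - 1) * r ^ 2 + ((c : ℝ) - 1) ^ 2) +
        2 * r * ∑ i, (b i : ℝ) ^ 2 := by
  have hneighbours (i : Fin z) : ∑ j : Fin c with j.val < b i,
      (if j.val < c - 1 then r else (c : ℝ) - 1) = b i * r := by
    rw [sum_congr rfl fun j hj => if_pos ((mem_filter.mp hj).2.trans_le (hb i)),
      Finset.sum_const, Fin.card_filter_val_lt, min_eq_right ((hb i).trans (Nat.sub_le c 1)),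
      nsmul_eq_mul]
  rw [thresholdTestVector, hG.append_dotProduct_adjMatrix_mulVec_append]
  simp [hneighbours, apply_ite (· ^ 2), Fin.sum_ite_val_lt (Nat.sub_le c 1), Nat.cast_sub hc,
    ← mul_assoc, ← sq, ← sum_mul]
  ring

end thresholdTestVector

/-- A connected threshold graph with `c ≥ 3` type-1 vertices, `z ≥ 1` type-0
vertices and BZP sequence `b₁, …, b_z` (the `i`-th type-0 vertex joined to the first `b i`
vertices of the clique `K_c`) has spectral radius
`ρ ≥ (c − 2 + √(c² + 4F₁/(c−1)))/2`, where `F₁ = ∑ bᵢ²`. -/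
theorem threshold_quadratic_lower_bound (c z : ℕ) (hc : 3 ≤ c) (hz : 1 ≤ z)
    (b : Fin z → ℕ) (hb : ∀ i, 1 ≤ b i ∧ b i ≤ c - 1)
    (G : SimpleGraph (Fin (c + z))) [DecidableRel G.Adj]
    (hG : ∀ u v : Fin (c + z), G.Adj u v ↔ u ≠ v ∧
      ((u.1 < c ∧ v.1 < c) ∨
       (u.1 < c ∧ c ≤ v.1 ∧ u.1 < b ⟨v.1 - c, by have := v.isLt; omega⟩) ∨
       (v.1 < c ∧ c ≤ u.1 ∧ v.1 < b ⟨u.1 - c, by have := u.isLt; omega⟩)))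
    (ρ : ℝ)
    (hρ₂ : ∀ μ ∈ spectrum ℝ (G.adjMatrix ℝ), |μ| ≤ ρ) :
    ρ ≥ ((c : ℝ) - 2 +
        Real.sqrt ((c : ℝ) ^ 2 + 4 / ((c : ℝ) - 1) * ∑ i, (b i : ℝ) ^ 2)) / 2 := by
  set F : ℝ := ∑ i, (b i : ℝ) ^ 2
  set r : ℝ := ((c : ℝ) - 2 + √((c : ℝ) ^ 2 + 4 / ((c : ℝ) - 1) * F)) / 2
  have hc₁ : (0 : ℝ) < c - 1 := by
    have : (3 : ℝ) ≤ c := by exact_mod_cast hc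
    linarith
  have hroot : ((c : ℝ) - 1) * r ^ 2 = (c - 2) * (c - 1) * r + (c - 1) ^ 2 + F := by
    have hsqrt := Real.sq_sqrt (by positivity : 0 ≤ (c : ℝ) ^ 2 + 4 / ((c : ℝ) - 1) * F)
    have hcancel : ((c : ℝ) - 1) * (4 / ((c : ℝ) - 1) * F) = 4 * F := by field_simp
    linear_combination ((c : ℝ) - 1) / 4 * hsqrt + hcancel / 4
  have hray := (isHermitian_iff_isSymm.mpr (G.isSymm_adjMatrix (α := ℝ)))
    |>.dotProduct_mulVec_le_mul_dotProduct (fun μ hμ => (abs_le.mp (hρ₂ μ hμ)).2)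
      (thresholdTestVector c b r)
  rw [(SimpleGraph.isThresholdWith_of_adj_iff hz hG)
      |>.dotProduct_adjMatrix_mulVec_thresholdTestVector (by omega) (fun i => (hb i).2),
    thresholdTestVector_dotProduct_self (by omega)] at hray
  have hnorm : 0 < ((c : ℝ) - 1) * r ^ 2 + ((c : ℝ) - 1) ^ 2 + F := by positivity
  refine le_of_mul_le_mul_right ?_ hnorm
  linear_combination hray + r * hroot
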